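/- arXiv:2410.19441 — 7 statements merged into one kernel-verified Lean document; each statement's English description precedes it below -/
import Mathlib

section
/- Define d : ℕ+ × ℕ+ → ℕ recursively by d(1,1) = 1, and for α, β ≥ 1: if α and β are both odd and α ≡ β (mod 4) then d(α,β) = d((α+1)/2, (β+1)/2); if α and β are both odd and α ≢ β (mod 4) then d(α,β) = d((α-1)/2, (β+1)/2); if α and β are both even and α ≡ β (mod 4) then d(α,β) = d(α/2, β/2); if α and β are both even and α ≢ β (mod 4) then d(α,β) = 0. Then for all positive integers α ≥ β of the same parity, d(α,β) = 1 if and only if (α + β - 2) ⊇_2 (α - β). -/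
/-- `a ⊇_2 b`: every binary digit of `b` is `0` or equals the corresponding digit of `a`. -/
def Sup2 (a b : ℕ) : Prop :=
  ∀ i, b.testBit i = false ∨ b.testBit i = a.testBit i

/-!
Put `u = (α + β) / 2 - 1` and `v = (α - β) / 2`, so that `α + β - 2 = 2u` and `α - β = 2v`.
In each of the three recursive cases the new pair has parameters `(u / 2, v / 2)`, i.e. the
recursion shifts the binary expansions of `u` and `v` one place to the right; and the
vanishing case is exactly `v` odd with `u` even, where the lowest digit of `v` is not
contained in that of `u`. Hence `d(α, β) = 1` iff no digit of `v` escapes `u`, down to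
the base case `u = v = 0`.
-/

lemma sup2_iff (a b : ℕ) :
    Sup2 a b ↔ (b % 2 = 1 → a % 2 = 1) ∧ Sup2 (a / 2) (b / 2) := by
  constructor
  · intro h
    refine ⟨fun hb => ?_, fun i => by simpa only [Nat.testBit_div_two] using h (i + 1)⟩
    simpa [Nat.testBit_zero, hb] using h 0
  · rintro ⟨h₀, h⟩ (_ | i)
    · simp only [Nat.testBit_zero]
      by_cases hb : b % 2 = 1 <;> simp [hb, h₀]
    · simpa only [Nat.testBit_add_one] using h i

lemma sup2_two_mul_iff (a b : ℕ) : Sup2 (2 * a) (2 * b) ↔ Sup2 a b := by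
  rw [sup2_iff]
  simp

lemma sup2_zero_right (a : ℕ) : Sup2 a 0 :=
  fun i => Or.inl (Nat.zero_testBit i)

lemma sup2_iff_halves {α β : ℕ} (hβ : 1 ≤ β) (hpar : α % 2 = β % 2) :
    Sup2 (α + β - 2) (α - β) ↔ Sup2 ((α + β) / 2 - 1) ((α - β) / 2) := by
  rw [← sup2_two_mul_iff ((α + β) / 2 - 1), show 2 * ((α + β) / 2 - 1) = α + β - 2 by omega,
    show 2 * ((α - β) / 2) = α - β by omega]

section Recursion

variable {f : ℕ → ℕ → ℕ}
  (h11 : f 1 1 = 1)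
  (hoo : ∀ α β, 1 ≤ α → 1 ≤ β → Odd α → Odd β → α % 4 = β % 4 →
    f α β = f ((α + 1) / 2) ((β + 1) / 2))
  (hoo' : ∀ α β, 1 ≤ α → 1 ≤ β → Odd α → Odd β → α % 4 ≠ β % 4 →
    f α β = f ((α - 1) / 2) ((β + 1) / 2))
  (hee : ∀ α β, 1 ≤ α → 1 ≤ β → Even α → Even β → α % 4 = β % 4 →
    f α β = f (α / 2) (β / 2))
  (hee' : ∀ α β, 1 ≤ α → 1 ≤ β → Even α → Even β → α % 4 ≠ β % 4 →
    f α β = 0)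
include h11 hoo hoo' hee hee'

lemma eq_one_iff_sup2_halves (α : ℕ) :
    ∀ β, 1 ≤ β → β ≤ α → α % 2 = β % 2 →
      (f α β = 1 ↔ Sup2 ((α + β) / 2 - 1) ((α - β) / 2)) := by
  induction α using Nat.strong_induction_on with
  | _ α ih =>
  intro β hβ hβα hpar
  rcases Nat.lt_or_ge α 2 with hα | hα
  · obtain ⟨rfl, rfl⟩ : α = 1 ∧ β = 1 := by omega
    simpa [h11] using sup2_zero_right 0
  have descend : ∀ α' β', α' < α → 1 ≤ β' → β' ≤ α' → α' % 2 = β' % 2 →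
      (α' + β') / 2 - 1 = ((α + β) / 2 - 1) / 2 → (α' - β') / 2 = (α - β) / 2 / 2 →
      ((α - β) / 2 % 2 = 1 → ((α + β) / 2 - 1) % 2 = 1) →
      (f α' β' = 1 ↔ Sup2 ((α + β) / 2 - 1) ((α - β) / 2)) := by
    intro α' β' hα' hβ' hβα' hpar' hu hv hdigit
    rw [ih α' hα' β' hβ' hβα' hpar', hu, hv, sup2_iff ((α + β) / 2 - 1), and_iff_right hdigit]
  rcases Nat.even_or_odd β with hβe | hβo
  · have hαe : Even α := by rw [Nat.even_iff] at hβe ⊢; omega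
    by_cases h4 : α % 4 = β % 4
    · rw [hee α β (by omega) hβ hαe hβe h4]
      rw [Nat.even_iff] at hαe hβe
      exact descend _ _ (by omega) (by omega) (by omega) (by omega) (by omega) (by omega)
        (by omega)
    · rw [hee' α β (by omega) hβ hαe hβe h4]
      rw [Nat.even_iff] at hαe hβe
      have hdigit : (α - β) / 2 % 2 = 1 ∧ ((α + β) / 2 - 1) % 2 = 0 := by omega
      rw [sup2_iff, hdigit.1, hdigit.2]
      simp
  · have hαo : Odd α := by rw [Nat.odd_iff] at hβo ⊢; omega
    by_cases h4 : α % 4 = β % 4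
    · rw [hoo α β (by omega) hβ hαo hβo h4]
      rw [Nat.odd_iff] at hαo hβo
      exact descend _ _ (by omega) (by omega) (by omega) (by omega) (by omega) (by omega)
        (by omega)
    · rw [hoo' α β (by omega) hβ hαo hβo h4]
      rw [Nat.odd_iff] at hαo hβo
      exact descend _ _ (by omega) (by omega) (by omega) (by omega) (by omega) (by omega)
        (by omega)

end Recursion

theorem stmt_2 (f : ℕ → ℕ → ℕ)
    (h11 : f 1 1 = 1)
    (hoo : ∀ α β, 1 ≤ α → 1 ≤ β → Odd α → Odd β → α % 4 = β % 4 →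
      f α β = f ((α + 1) / 2) ((β + 1) / 2))
    (hoo' : ∀ α β, 1 ≤ α → 1 ≤ β → Odd α → Odd β → α % 4 ≠ β % 4 →
      f α β = f ((α - 1) / 2) ((β + 1) / 2))
    (hee : ∀ α β, 1 ≤ α → 1 ≤ β → Even α → Even β → α % 4 = β % 4 →
      f α β = f (α / 2) (β / 2))
    (hee' : ∀ α β, 1 ≤ α → 1 ≤ β → Even α → Even β → α % 4 ≠ β % 4 →
      f α β = 0)
    (α β : ℕ) (hβ : 1 ≤ β) (hβα : β ≤ α) (hpar : α % 2 = β % 2) :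
    f α β = 1 ↔ Sup2 (α + β - 2) (α - β) := by
  rw [sup2_iff_halves hβ hpar]
  exact eq_one_iff_sup2_halves h11 hoo hoo' hee hee' α β hβ hβα hpar
end

section
/- Let r and b be integers with r ≥ 0. Say the pair (r, b) is 2-special if, writing r = Σ_i 2^i r_i in base 2 (so each r_i ∈ {0,1}), there exists an expression b = Σ_i 2^i t_i with t_i = 0 whenever r_i = 0 and t_i ∈ {1, -1} whenever r_i = 1. Then for natural numbers u ≥ v and δ, setting m = u - v: (m + δ, m) is 2-special if and only if δ is even and (m + δ) ⊇_2 (δ/2), i.e. the base-2 expansion of m + δ contains that of δ/2. -/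
lemma sum_testBit_aux : ∀ k n : ℕ, n < 2^k →
    n = ∑ i ∈ Finset.range k, 2^i * (if n.testBit i then 1 else 0) := by
  intro k
  induction k with
  | zero => intro n hn; simpa using Nat.lt_one_iff.mp hn
  | succ k ih =>
    intro n hn
    have h2 : n / 2 < 2^k := by
      rw [Nat.div_lt_iff_lt_mul (by norm_num)]
      calc n < 2^(k+1) := hn
        _ = 2^k * 2 := by ring
    rw [Finset.sum_range_succ']
    simp only [Nat.testBit_succ, Nat.testBit_zero, pow_succ, pow_zero, one_mul]
    have hh : ∑ i ∈ Finset.range k, 2 ^ i * 2 * (if (n / 2).testBit i then 1 else 0)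
        = 2 * (n / 2) := by
      conv_rhs => rw [ih (n/2) h2]
      rw [Finset.mul_sum]; congr 1; ext i; ring
    rw [hh]
    by_cases h : n % 2 = 1 <;> simp [h] <;> omega

lemma testBit_sum_aux : ∀ (k : ℕ) (c : ℕ → Bool) (j : ℕ),
    (∑ i ∈ Finset.range k, 2^i * (if c i then 1 else 0)).testBit j
      = (c j && decide (j < k)) := by
  intro k
  induction k with
  | zero => simp
  | succ k ih =>
    intro c j
    rw [Finset.sum_range_succ']
    simp only [pow_succ, pow_zero, one_mul]
    have hrw : ∑ i ∈ Finset.range k, 2 ^ i * 2 * (if c (i+1) then 1 else 0)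
        = 2 * ∑ i ∈ Finset.range k, 2 ^ i * (if c (i+1) then 1 else 0) := by
      rw [Finset.mul_sum]; congr 1; ext i; ring
    rw [hrw]
    set T := ∑ i ∈ Finset.range k, 2 ^ i * (if c (i+1) then 1 else 0) with hT
    cases j with
    | zero =>
      have : (2 * T + (if c 0 then 1 else 0)) % 2 = (if c 0 then 1 else 0) := by
        split <;> omega
      simp only [Nat.testBit_zero, this]
      split <;> simp_all
    | succ j =>
      rw [Nat.testBit_succ]
      have : (2 * T + (if c 0 then 1 else 0)) / 2 = T := by split <;> omega
      rw [this, ih (fun i => c (i+1)) j]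
      simp [Nat.lt_succ_iff, Nat.succ_lt_succ_iff]

lemma sum_testBit_int (k n : ℕ) (h : n < 2^k) :
    (n:ℤ) = ∑ i ∈ Finset.range k, 2^i * (if n.testBit i then 1 else 0) := by
  have := sum_testBit_aux k n h
  have : (n:ℤ) = ((∑ i ∈ Finset.range k, 2^i * (if n.testBit i then 1 else 0) : ℕ) : ℤ) := by
    exact congrArg _ this
  rw [this]
  push_cast [apply_ite (Nat.cast : ℕ → ℤ)]
  rfl

/-- The pair `(r, b)` is `2`-special: writing `r = Σ 2^i r_i` in binary, there exist
`t_i` with `t_i = 0` when `r_i = 0` and `t_i ∈ {1, -1}` when `r_i = 1`,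
such that `b = Σ 2^i t_i`. -/
def TwoSpecial (r : ℕ) (b : ℤ) : Prop :=
  ∃ t : ℕ → ℤ,
    (∀ i, if r.testBit i then t i = 1 ∨ t i = -1 else t i = 0) ∧
    b = ∑ i ∈ Finset.range (r + 1), 2 ^ i * t i

theorem stmt_4 (m δ : ℕ) :
    TwoSpecial (m + δ) (m : ℤ) ↔ Even δ ∧ Sup2 (m + δ) (δ / 2) := by
  set r := m + δ with hr
  have hrlt : r < 2 ^ (r + 1) := lt_of_lt_of_le (Nat.lt_two_pow_self (n := r))
    (Nat.pow_le_pow_right (by norm_num) (Nat.le_succ r))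
  constructor
  · rintro ⟨t, ht, hsum⟩
    set c : ℕ → Bool := fun i => decide (t i = -1) with hc
    set s : ℕ := ∑ i ∈ Finset.range (r + 1), 2 ^ i * (if c i then 1 else 0) with hs
    have hsplit : ∀ i, t i = (if r.testBit i then (1:ℤ) else 0)
        - 2 * (if c i then (1:ℤ) else 0) := by
      intro i
      have := ht i
      by_cases hb : r.testBit i
      · rw [if_pos hb] at this
        rcases this with h1 | h1 <;> simp [hc, h1, hb]
      · rw [if_neg hb] at this
        simp [hc, this, hb]
    have hscast : (s:ℤ) = ∑ i ∈ Finset.range (r + 1), 2 ^ i * (if c i then (1:ℤ) else 0) := by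
      rw [hs]
      push_cast [apply_ite (Nat.cast : ℕ → ℤ)]
      rfl
    have hm : (m:ℤ) = (r:ℤ) - 2 * s := by
      rw [hsum, hscast, sum_testBit_int (r+1) r hrlt, Finset.mul_sum, ← Finset.sum_sub_distrib]
      refine Finset.sum_congr rfl fun i _ => ?_
      rw [hsplit i]; ring
    have hδ : δ = 2 * s := by
      have : (δ:ℤ) = 2 * s := by rw [hr] at hm; push_cast at hm ⊢; linarith
      exact_mod_cast this
    refine ⟨⟨s, by omega⟩, fun i => ?_⟩
    have hbit : (δ / 2).testBit i = (c i && decide (i < r + 1)) := by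
      have : δ / 2 = s := by omega
      rw [this, hs, testBit_sum_aux]
    by_cases hci : c i = true ∧ i < r + 1
    · right
      have hti : t i = -1 := by simpa [hc] using hci.1
      have hrb : r.testBit i = true := by
        by_contra hb
        have := ht i
        rw [if_neg (by simpa using hb)] at this
        omega
      simp [hbit, hci.1, hci.2, hrb]
    · left
      rw [hbit]
      rcases not_and_or.mp hci with h | h
      · simp [Bool.not_eq_true] at h; simp [h]
      · simp [h]
  · rintro ⟨⟨s', hs'⟩, hsup⟩
    set s : ℕ := δ / 2 with hs
    have hδ : δ = 2 * s := by omega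
    have hsub : ∀ i, s.testBit i = true → r.testBit i = true := by
      intro i hi
      rcases hsup i with h | h
      · rw [hi] at h; exact absurd h (by simp)
      · rw [← h, hi]
    have hslt : s < 2 ^ (r + 1) := lt_of_le_of_lt (by omega) hrlt
    refine ⟨fun i => (if r.testBit i then (1:ℤ) else 0) - 2 * (if s.testBit i then (1:ℤ) else 0),
      fun i => ?_, ?_⟩
    · by_cases hb : r.testBit i
      · simp only [hb, if_true]
        by_cases hsb : s.testBit i <;> simp [hsb]
      · have hsb : s.testBit i = false := by
          by_contra h
          exact hb (hsub i (by simpa using h))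
        simp [hb, hsb]
    · have h1 := sum_testBit_int (r+1) r hrlt
      have h2 := sum_testBit_int (r+1) s hslt
      have : ∑ i ∈ Finset.range (r + 1),
          2 ^ i * ((if r.testBit i then (1:ℤ) else 0) - 2 * (if s.testBit i then (1:ℤ) else 0))
          = (r:ℤ) - 2 * s := by
        rw [h1, h2, Finset.mul_sum, ← Finset.sum_sub_distrib]
        refine Finset.sum_congr rfl fun i _ => ?_
        ring
      rw [this, hr]
      push_cast
      omega
end

section
/- Let λ₂ ≥ 1 and α ≥ 1 be natural numbers, let L be the smallest natural number with λ₂ < 2^L, and let ν = ν₂(α) be the 2-adic valuation of α. If α + 2^ν ≡ 0 (mod 2^L) and ν < L, then the set of d with 0 ≤ d ≤ λ₂ and (α - 1 + d) ⊇_2 d is exactly {0, 2^ν} ∩ {0, …, λ₂}, where membership of 2^ν requires 2^ν ≤ λ₂. -/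
/-- `L2 m` is the least `L` with `m < 2 ^ L`. -/
def L2 (m : ℕ) : ℕ :=
  Nat.find (⟨m, (Nat.lt_two_pow_self (n := m))⟩ : ∃ K, m < 2 ^ K)

/-- If every set bit of `x` is set in `y`, then `x ≤ y`. -/
lemma subset_le {x y : ℕ} (h : ∀ i, x.testBit i = true → y.testBit i = true) : x ≤ y := by
  have hxy : x &&& y = x := by
    apply Nat.eq_of_testBit_eq
    intro i
    rw [Nat.testBit_and]
    cases hx : x.testBit i with
    | false => simp
    | true => simp [h i hx]
  calc x = x &&& y := hxy.symm
  _ ≤ y := Nat.and_le_right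

theorem stmt_5 (lam2 α : ℕ) (hlam : 1 ≤ lam2) (hα : 1 ≤ α)
    (hν : padicValNat 2 α < L2 lam2)
    (hmod : (α + 2 ^ padicValNat 2 α) % 2 ^ L2 lam2 = 0) :
    ∀ d ≤ lam2,
      (Sup2 (α - 1 + d) d ↔
        d = 0 ∨ (d = 2 ^ padicValNat 2 α ∧ 2 ^ padicValNat 2 α ≤ lam2)) := by
  intro d hd
  set L := L2 lam2 with hLdef
  set ν := padicValNat 2 α with hνdef
  set P := 2 ^ L with hPdef
  set Q := 2 ^ ν with hQdef
  have hlamP : lam2 < P := Nat.find_spec (⟨lam2, (Nat.lt_two_pow_self (n := lam2))⟩ : ∃ K, lam2 < 2 ^ K)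
  have hQ1 : 1 ≤ Q := Nat.one_le_two_pow
  have hQ2P : Q * 2 ≤ P := by
    rw [hQdef, hPdef]
    calc 2 ^ ν * 2 = 2 ^ (ν + 1) := by ring
    _ ≤ 2 ^ L := Nat.pow_le_pow_right (by norm_num) hν
  -- α % P = P - Q
  have hdvd : P ∣ α + Q := Nat.dvd_of_mod_eq_zero hmod
  obtain ⟨k, hk⟩ := hdvd
  have hαmod : α % P = P - Q := by
    match k, hk with
    | 0, hk => omega
    | k + 1, hk =>
      have hk' : α = (P - Q) + P * k := by
        have : P * (k + 1) = P * k + P := by ring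
        omega
      rw [hk', Nat.add_mul_mod_self_left, Nat.mod_eq_of_lt (by omega)]
  -- (α - 1) % P = P - Q - 1
  set N : ℕ := P - Q - 1 with hNdef
  have hα1mod : (α - 1) % P = N := by
    have h1 : α - 1 = N + P * (α / P) := by
      have h2 := Nat.div_add_mod α P
      omega
    rw [h1, Nat.add_mul_mod_self_left, Nat.mod_eq_of_lt (by omega)]
  have hdP : d < P := lt_of_le_of_lt hd hlamP
  -- bits of α - 1 + d below L agree with bits of (N + d) % P
  have hkey : ∀ i, i < L → (α - 1 + d).testBit i = ((N + d) % P).testBit i := by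
    intro i hi
    have h1 : (α - 1 + d) % P = (N + d) % P := by
      conv_lhs => rw [Nat.add_mod, hα1mod]
      conv_rhs => rw [Nat.add_mod, Nat.mod_eq_of_lt (show N < P by omega)]
    calc (α - 1 + d).testBit i = ((α - 1 + d) % P).testBit i := by
          rw [Nat.testBit_mod_two_pow]; simp [hi]
    _ = ((N + d) % P).testBit i := by rw [h1]
  have hbitlt : ∀ i, d.testBit i = true → i < L := by
    intro i hbit
    by_contra hiL
    have : d < 2 ^ i := lt_of_lt_of_le hdP (Nat.pow_le_pow_right (by norm_num) (by omega))
    rw [Nat.testBit_lt_two_pow this] at hbit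
    exact absurd hbit (by simp)
  constructor
  · intro hsup
    have hsub : ∀ i, d.testBit i = true → ((N + d) % P).testBit i = true := by
      intro i hbit
      rcases hsup i with h | h
      · rw [hbit] at h; exact absurd h (by simp)
      · rw [hbit] at h
        rw [← hkey i (hbitlt i hbit)]
        exact h.symm
    by_cases hd0 : d = 0
    · left; exact hd0
    right
    by_cases hNP : N + d < P
    · -- then d ≤ Q
      have hdQ : d ≤ Q := by omega
      rw [Nat.mod_eq_of_lt hNP] at hsub
      rcases eq_or_lt_of_le hdQ with heq | hlt
      · exact ⟨heq, by omega⟩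
      · -- d < Q, d ≠ 0 : contradiction
        exfalso
        -- bits of N + d below ν agree with bits of d - 1
        have hmodQ : (N + d) % Q = d - 1 := by
          set R := 2 ^ (L - ν) with hRdef
          have hPQR : P = Q * R := by
            rw [hPdef, hQdef, hRdef, ← pow_add]
            congr 1
            omega
          have hR1 : 1 ≤ R := Nat.one_le_two_pow
          have hQR : Q * R = Q * (R - 1) + Q := by
            have h : R = (R - 1) + 1 := by omega
            calc Q * R = Q * ((R - 1) + 1) := by rw [← h]
            _ = Q * (R - 1) + Q := by ring
          have hNd : N + d = (d - 1) + Q * (R - 1) := by omega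
          rw [hNd, Nat.add_mul_mod_self_left, Nat.mod_eq_of_lt (by omega)]
        have hbitν : ∀ i, d.testBit i = true → i < ν := by
          intro i hbit
          by_contra hiν
          have : d < 2 ^ i := lt_of_lt_of_le hlt
            (Nat.pow_le_pow_right (by norm_num) (by omega))
          rw [Nat.testBit_lt_two_pow this] at hbit
          exact absurd hbit (by simp)
        have hsub' : ∀ i, d.testBit i = true → (d - 1).testBit i = true := by
          intro i hbit
          have hiν := hbitν i hbit
          have h1 := hsub i hbit
          have h2 : ((N + d) % Q).testBit i = (N + d).testBit i := by
            rw [hQdef, Nat.testBit_mod_two_pow]; simp [hiν]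
          rw [hmodQ] at h2
          rw [h2]; exact h1
        have := subset_le hsub'
        omega
    · -- N + d ≥ P : contradiction
      exfalso
      have hmodP : (N + d) % P = d - Q - 1 := by
        have h1 : N + d = (d - Q - 1) + P * 1 := by omega
        rw [h1, Nat.add_mul_mod_self_left, Nat.mod_eq_of_lt (by omega)]
      rw [hmodP] at hsub
      have := subset_le hsub
      omega
  · rintro (rfl | ⟨rfl, hQlam⟩)
    · intro i; left; exact Nat.zero_testBit i
    · intro i
      by_cases hbit : Q.testBit i = true
      · right
        rw [hbit]
        have hiν : ν = i := by
          rw [hQdef, Nat.testBit_two_pow] at hbit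
          exact of_decide_eq_true hbit
        subst hiν
        rw [hkey ν hν]
        have h1 : N + Q = P - 1 := by omega
        rw [h1, Nat.mod_eq_of_lt (by omega), hPdef, Nat.testBit_two_pow_sub_one]
        simp [hν]
      · left
        simpa using hbit
end

section
/- Let λ₂ ≥ 1 and α ≥ 1 be natural numbers, let L be the least natural number with λ₂ < 2^L, and ν = ν₂(α). If α ≡ 0 (mod 2^L) (i.e., ν ≥ L), then the only d with 0 ≤ d ≤ λ₂ and (α - 1 + d) ⊇_2 d is d = 0. -/
theorem stmt_6 (lam2 α : ℕ) (hlam : 1 ≤ lam2) (hα : 1 ≤ α)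
    (hmod : 2 ^ L2 lam2 ∣ α) :
    ∀ d ≤ lam2, Sup2 (α - 1 + d) d → d = 0 := by
  intro d hd hsup
  by_contra hd0
  obtain ⟨i, m, hm, rfl⟩ := Nat.exists_eq_two_pow_mul_odd hd0
  have hm2 : m % 2 = 1 := Nat.odd_iff.mp hm
  set L := L2 lam2 with hL
  have hlt : lam2 < 2 ^ L := Nat.find_spec (⟨lam2, (Nat.lt_two_pow_self (n := lam2))⟩ : ∃ K, lam2 < 2 ^ K)
  have hmpos : 0 < m := Nat.pos_of_ne_zero (by rintro rfl; simp at hm2)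
  have h2i : 2 ^ i ≤ 2 ^ i * m := Nat.le_mul_of_pos_right _ hmpos
  have hiL : i < L := by
    have : (2:ℕ) ^ i < 2 ^ L := lt_of_le_of_lt (le_trans h2i hd) hlt
    exact (Nat.pow_lt_pow_iff_right (by norm_num)).mp this
  have hdvd : (2:ℕ) ^ (i+1) ∣ α := dvd_trans (pow_dvd_pow 2 hiL) hmod
  -- d mod 2^(i+1) = 2^i
  have hdmod : (2 ^ i * m) % 2 ^ (i+1) = 2 ^ i := by
    rw [pow_succ, Nat.mul_mod_mul_left, hm2, mul_one]
  -- testBit d i = true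
  have htd : (2 ^ i * m).testBit i = true := by
    rw [Nat.testBit_eq_decide_div_mod_eq]
    simp [Nat.mul_div_cancel_left _ (Nat.two_pow_pos i), hm2]
  -- compute (α - 1 + 2^i*m) % 2^(i+1) = 2^i - 1
  obtain ⟨c, hc⟩ := hdvd
  have hcpos : 0 < c := Nat.pos_of_ne_zero (by rintro rfl; simp at hc; omega)
  have key : (α - 1 + 2 ^ i * m) % 2 ^ (i+1) = 2 ^ i - 1 := by
    have hq := Nat.div_add_mod (2 ^ i * m) (2 ^ (i+1))
    set q := (2 ^ i * m) / 2 ^ (i+1) with hqdef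
    have hp : 0 < (2:ℕ)^i := Nat.two_pow_pos i
    have h1 : (2:ℕ)^(i+1) = 2 * 2^i := by ring
    have heq : α - 1 + 2 ^ i * m = 2 ^ i - 1 + 2 ^ (i+1) * (c + q) := by
      rw [mul_add]; omega
    rw [heq, Nat.add_mul_mod_self_left, Nat.mod_eq_of_lt (by omega)]
  have hta : (α - 1 + 2 ^ i * m).testBit i = false := by
    have := Nat.testBit_mod_two_pow (α - 1 + 2 ^ i * m) (i+1) i
    rw [key] at this
    have hp : 0 < (2:ℕ)^i := Nat.two_pow_pos i
    have h2 : ((2:ℕ)^i - 1).testBit i = false := Nat.testBit_lt_two_pow (by omega)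
    simp [h2, Nat.lt_succ_self] at this
    exact this
  rcases hsup i with h | h <;> rw [htd] at h <;> simp_all
end

section
/- Let α ≥ 2 and L ≥ 1 be natural numbers with ν = ν₂(α) and suppose α + 2^ν ≡ 2^{L-1} (mod 2^L) with ν + 1 ≤ L - 1. Then (α - 1 + 2^{L-1}) ⊇_2 2^{L-1} holds, but (α + 2^L) ⊇_2 2^{L-1} fails. -/
theorem sup2_two_pow_iff {a n : ℕ} : Sup2 a (2 ^ n) ↔ a.testBit n = true := by
  refine ⟨fun h => ?_, fun h i => ?_⟩
  · rcases h n with h | h <;> simp_all [Nat.testBit_two_pow_self]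
  · rcases eq_or_ne n i with rfl | hne
    · simp [h]
    · simp [Nat.testBit_two_pow_of_ne hne]

theorem Nat.testBit_eq_of_eq_two_pow_mul_add {x a b i : ℕ} (hx : x = 2 ^ i * a + b)
    (hb : b < 2 ^ i) : x.testBit i = decide (a % 2 = 1) := by
  simp [hx, Nat.testBit_mul_two_pow_add_eq, Nat.testBit_lt_two_pow hb]

theorem Nat.exists_eq_two_pow_mul_odd_of_mod_two_pow_succ {x n : ℕ}
    (h : x % 2 ^ (n + 1) = 2 ^ n) : ∃ k, x = 2 ^ n * (2 * k + 1) := by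
  have hx := Nat.div_add_mod x (2 ^ (n + 1))
  rw [h, pow_succ] at hx
  exact ⟨x / (2 ^ n * 2), by linarith⟩

theorem stmt_10_general (α L : ℕ)
    (hνL : padicValNat 2 α + 1 < L)
    (hmod : (α + 2 ^ padicValNat 2 α) % 2 ^ L = 2 ^ (L - 1) % 2 ^ L) :
    Sup2 (α - 1 + 2 ^ (L - 1)) (2 ^ (L - 1)) ∧
      ¬ Sup2 (α + 2 ^ L) (2 ^ (L - 1)) := by
  generalize padicValNat 2 α = ν at *
  obtain ⟨n, rfl⟩ : ∃ n, L = n + 1 := ⟨L - 1, by omega⟩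
  rw [Nat.add_sub_cancel, Nat.mod_eq_of_lt (Nat.pow_lt_pow_succ one_lt_two)] at hmod
  obtain ⟨k, hk⟩ := Nat.exists_eq_two_pow_mul_odd_of_mod_two_pow_succ hmod
  have hν_pos : 0 < 2 ^ ν := Nat.two_pow_pos ν
  have hνn : 2 ^ ν < 2 ^ n := Nat.pow_lt_pow_right one_lt_two (by omega)
  rw [mul_add] at hk
  have h_below : (α - 1 + 2 ^ n).testBit n = decide ((2 * k + 1) % 2 = 1) :=
    Nat.testBit_eq_of_eq_two_pow_mul_add (b := 2 ^ n - 2 ^ ν - 1) (by rw [mul_add]; omega)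
      (by omega)
  have h_above : (α + 2 ^ (n + 1)).testBit n = decide ((2 * k + 2) % 2 = 1) :=
    Nat.testBit_eq_of_eq_two_pow_mul_add (b := 2 ^ n - 2 ^ ν) (by rw [pow_succ, mul_add]; omega)
      (by omega)
  rw [Nat.add_sub_cancel, sup2_two_pow_iff, sup2_two_pow_iff, h_below, h_above]
  simp only [decide_eq_true_eq]
  omega

theorem stmt_10 (α L : ℕ) (hα : 2 ≤ α)
    (hνL : padicValNat 2 α + 1 < L)
    (hmod : (α + 2 ^ padicValNat 2 α) % 2 ^ L = 2 ^ (L - 1) % 2 ^ L) :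
    Sup2 (α - 1 + 2 ^ (L - 1)) (2 ^ (L - 1)) ∧
      ¬ Sup2 (α + 2 ^ L) (2 ^ (L - 1)) :=
  stmt_10_general α L hνL hmod
end

section
/- Let α ≥ 2 and L be natural numbers with ν = ν₂(α), and suppose α ≡ 2^ν (mod 2^L) with ν + 1 < L. Then (α - 1 + 2^{ν+1}) ⊇_2 2^{ν+1} holds, but (α + 2^{ν+2}) ⊇_2 2^{ν+1} fails. -/
theorem Nat.testBit_two_pow_mul_add_self {n q r : ℕ} (hr : r < 2 ^ n) :
    (2 ^ n * q + r).testBit n = q.testBit 0 := by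
  simp [Nat.testBit_two_pow_mul_add q hr]

theorem exists_eq_two_pow_padicValNat_add {α L : ℕ} (hα : α ≠ 0)
    (hL : padicValNat 2 α + 2 ≤ L) (hmod : 2 ^ L ∣ α - 2 ^ padicValNat 2 α) :
    ∃ q, α = 2 ^ padicValNat 2 α + 2 ^ (padicValNat 2 α + 2) * q := by
  have hle : 2 ^ padicValNat 2 α ≤ α := Nat.le_of_dvd (by omega) pow_padicValNat_dvd
  obtain ⟨q, hq⟩ := (Nat.pow_dvd_pow 2 hL).trans hmod
  exact ⟨q, by omega⟩

theorem stmt_11 (α L : ℕ) (hα : 2 ≤ α)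
    (hνL : padicValNat 2 α + 1 < L)
    (hmod : 2 ^ L ∣ (α - 2 ^ padicValNat 2 α)) :
    Sup2 (α - 1 + 2 ^ (padicValNat 2 α + 1)) (2 ^ (padicValNat 2 α + 1)) ∧
      ¬ Sup2 (α + 2 ^ (padicValNat 2 α + 2)) (2 ^ (padicValNat 2 α + 1)) := by
  obtain ⟨q, hq⟩ := exists_eq_two_pow_padicValNat_add (by omega) hνL hmod
  set ν := padicValNat 2 α
  have hlt : 2 ^ ν < 2 ^ (ν + 1) := Nat.pow_lt_pow_succ one_lt_two
  have hA : α - 1 + 2 ^ (ν + 1) = 2 ^ (ν + 1) * (2 * q + 1) + (2 ^ ν - 1) := by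
    have := Nat.one_le_two_pow (n := ν)
    rw [hq]; zify [this, this.trans (Nat.le_add_right _ _)]; ring
  have hB : α + 2 ^ (ν + 2) = 2 ^ (ν + 1) * (2 * (q + 1)) + 2 ^ ν := by
    rw [hq]; ring
  rw [sup2_two_pow_iff, sup2_two_pow_iff, hA, hB, Nat.testBit_two_pow_mul_add_self (by omega),
    Nat.testBit_two_pow_mul_add_self hlt]
  simp
end

section
/- Suppose λ₂ ≥ 1, α ≥ 1 with ν = ν₂(α) ≥ 4, λ₂ ≤ 9, L = least natural with λ₂ < 2^L, and 2^L ∣ (α + 2^ν). Then the set {d : 0 ≤ d ≤ λ₂, (α - 2 + 2d) ⊇_2 d} is contained in {0, 2, 4, 8}, and for each d in this set with d ≤ λ₂, setting α' = α + 2d, ν' = ν₂(α'), L' = least natural with λ₂ - d < 2^{L'}, one has 2^{L'} ∣ (α' + 2^{ν'}). -/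
lemma L2_le {m k : ℕ} (h : m < 2 ^ k) : L2 m ≤ k := Nat.find_le h

lemma testBit_low {n m i : ℕ} (hi : i < 4) (h : n % 16 = m % 16) :
    n.testBit i = m.testBit i := by
  have h1 := Nat.testBit_mod_two_pow n 4 i
  have h2 := Nat.testBit_mod_two_pow m 4 i
  simp only [hi, decide_true, Bool.true_and] at h1 h2
  rw [← h1, ← h2]
  norm_num [h]

lemma val_eq {a v : ℕ} (ha : a ≠ 0) (h1 : 2 ^ v ∣ a) (h2 : ¬ 2 ^ (v + 1) ∣ a) :
    padicValNat 2 a = v := by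
  haveI : Fact (Nat.Prime 2) := ⟨Nat.prime_two⟩
  have l1 : v ≤ padicValNat 2 a := (padicValNat_dvd_iff_le ha).mp h1
  have l2 : ¬ (v + 1 ≤ padicValNat 2 a) := fun h => h2 ((padicValNat_dvd_iff_le ha).mpr h)
  omega

theorem stmt_15 (lam2 α : ℕ) (hlam : 1 ≤ lam2) (hlam9 : lam2 ≤ 9)
    (hα : 1 ≤ α) (hν : 4 ≤ padicValNat 2 α)
    (hmod : 2 ^ L2 lam2 ∣ (α + 2 ^ padicValNat 2 α)) :
    ∀ d ≤ lam2, Sup2 (α - 2 + 2 * d) d →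
      (d = 0 ∨ d = 2 ∨ d = 4 ∨ d = 8) ∧
      2 ^ L2 (lam2 - d) ∣ (α + 2 * d + 2 ^ padicValNat 2 (α + 2 * d)) := by
  haveI : Fact (Nat.Prime 2) := ⟨Nat.prime_two⟩
  have h16 : 16 ∣ α := by
    have := pow_padicValNat_dvd (p := 2) (n := α)
    have h4 : (2:ℕ) ^ 4 ∣ 2 ^ padicValNat 2 α := pow_dvd_pow 2 hν
    exact dvd_trans (by norm_num at h4 ⊢; exact h4) this
  intro d hd hsup
  have hd9 : d ≤ 9 := le_trans hd hlam9
  -- helper to kill a bad d via bit i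
  have bad : ∀ i < 4, d.testBit i = true →
      (14 + 2 * d).testBit i = false → False := by
    intro i hi hdi hni
    rcases hsup i with h | h
    · simp [hdi] at h
    · have hm : (α - 2 + 2 * d) % 16 = (14 + 2 * d) % 16 := by omega
      rw [testBit_low hi hm, hni] at h
      simp [hdi] at h
  interval_cases d
  · -- d = 0
    refine ⟨by tauto, ?_⟩
    simpa using hmod
  · exact absurd (bad 0 (by norm_num) (by decide) (by decide)) (by simp)
  · -- d = 2
    refine ⟨by tauto, ?_⟩
    have hv : padicValNat 2 (α + 2 * 2) = 2 := by
      apply val_eq (by omega)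
      · show (2:ℕ)^2 ∣ _; norm_num; omega
      · show ¬ (2:ℕ)^3 ∣ _; norm_num; omega
    rw [hv]
    have hL : L2 (lam2 - 2) ≤ 3 := L2_le (by norm_num; omega)
    exact dvd_trans (pow_dvd_pow 2 hL) (by norm_num; omega)
  · exact absurd (bad 0 (by norm_num) (by decide) (by decide)) (by simp)
  · -- d = 4
    refine ⟨by tauto, ?_⟩
    have hv : padicValNat 2 (α + 2 * 4) = 3 := by
      apply val_eq (by omega)
      · show (2:ℕ)^3 ∣ _; norm_num; omega
      · show ¬ (2:ℕ)^4 ∣ _; norm_num; omega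
    rw [hv]
    have hL : L2 (lam2 - 4) ≤ 3 := L2_le (by norm_num; omega)
    exact dvd_trans (pow_dvd_pow 2 hL) (by norm_num; omega)
  · exact absurd (bad 0 (by norm_num) (by decide) (by decide)) (by simp)
  · exact absurd (bad 2 (by norm_num) (by decide) (by decide)) (by simp)
  · exact absurd (bad 0 (by norm_num) (by decide) (by decide)) (by simp)
  · -- d = 8
    refine ⟨by tauto, ?_⟩
    have hv : 1 ≤ padicValNat 2 (α + 2 * 8) := by
      rw [← padicValNat_dvd_iff_le (by omega)]
      norm_num; omega
    have h2 : (2:ℕ) ∣ 2 ^ padicValNat 2 (α + 2 * 8) :=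
      dvd_trans (by norm_num) (pow_dvd_pow 2 hv)
    have hL : L2 (lam2 - 8) ≤ 1 := L2_le (by norm_num; omega)
    have hsum : (2:ℕ) ∣ α + 2 * 8 + 2 ^ padicValNat 2 (α + 2 * 8) := by
      obtain ⟨c, hc⟩ := h2
      omega
    refine dvd_trans (pow_dvd_pow 2 hL) ?_
    rw [pow_one]
    exact hsum
  · exact absurd (bad 0 (by norm_num) (by decide) (by decide)) (by simp)
end
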